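/- arXiv:2605.21214 — 2 statements merged into one kernel-verified Lean document; each statement's English description precedes it below -/
import Mathlib

section
/- For every temperature function α : S → ℝ with α(s) > 0 for all s, the soft Bellman operator T_α is a γ-contraction in the sup norm: for all Q, Q' : S × A → ℝ, ‖T_α Q − T_α Q'‖∞ ≤ γ · ‖Q − Q'‖∞, where ‖F‖∞ = max_{(s,a)∈S×A} |F(s,a)|. -/
open Finset Real

/-- The soft Bellman operator at temperature function `α`:
`(T_α Q)(s,a) = r(s,a) + γ·∑_{s'} P(s'|s,a)·α(s')·log(∑_{a'} exp(Q(s',a')/α(s')))`. -/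
noncomputable def softBellman {S A : Type*} [Fintype S] [Fintype A]
    (r : S → A → ℝ) (γ : ℝ) (P : S → A → S → ℝ) (α : S → ℝ)
    (Q : S → A → ℝ) (s : S) (a : A) : ℝ :=
  r s a + γ * ∑ s', P s a s' * (α s' * Real.log (∑ a', Real.exp (Q s' a' / α s')))

/-- Sup norm on `S × A → ℝ`: `‖F‖∞ = max_{(s,a)} |F(s,a)|`. -/
noncomputable def supNorm {S A : Type*} [Fintype S] [Fintype A] [Nonempty S] [Nonempty A]
    (Q : S → A → ℝ) : ℝ :=
  Finset.univ.sup' Finset.univ_nonempty (fun p : S × A => |Q p.1 p.2|)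

/-! `T_α Q (s,a) - T_α Q' (s,a)` is `γ` times a `P(·|s,a)`-average of differences of the
log-sum-exp smooth maxima `α(s') log ∑ exp(Q(s',·)/α(s'))` and the same for `Q'`. A smooth maximum
is monotone and commutes with adding constants, hence `1`-Lipschitz for the sup norm, and an
average of numbers bounded by `‖Q - Q'‖∞` is bounded by it. -/

section SmoothMax

variable {A : Type*} [Fintype A]

noncomputable def smoothMax (α : ℝ) (v : A → ℝ) : ℝ :=
  α * Real.log (∑ a, Real.exp (v a / α))

variable [Nonempty A] {α : ℝ}

lemma sum_exp_pos (v : A → ℝ) : 0 < ∑ a, Real.exp (v a) :=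
  sum_pos (fun _ _ => exp_pos _) univ_nonempty

lemma smoothMax_mono (hα : 0 < α) {v w : A → ℝ} (h : ∀ a, v a ≤ w a) :
    smoothMax α v ≤ smoothMax α w := by
  unfold smoothMax
  gcongr with a
  exact h a

lemma smoothMax_add_const (hα : 0 < α) (v : A → ℝ) (c : ℝ) :
    smoothMax α (fun a => v a + c) = smoothMax α v + c := by
  have hsum : ∑ a, Real.exp ((v a + c) / α) = Real.exp (c / α) * ∑ a, Real.exp (v a / α) := by
    rw [mul_sum]
    refine sum_congr rfl fun a _ => ?_
    rw [← exp_add, add_div, add_comm]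
  rw [smoothMax, smoothMax, hsum, log_mul (exp_ne_zero _) (sum_exp_pos _).ne', log_exp]
  field_simp
  ring

lemma smoothMax_le_add (hα : 0 < α) {v w : A → ℝ} {c : ℝ} (h : ∀ a, v a ≤ w a + c) :
    smoothMax α v ≤ smoothMax α w + c :=
  smoothMax_add_const hα w c ▸ smoothMax_mono hα h

lemma abs_smoothMax_sub_le (hα : 0 < α) {v w : A → ℝ} {c : ℝ} (h : ∀ a, |v a - w a| ≤ c) :
    |smoothMax α v - smoothMax α w| ≤ c := by
  rw [abs_sub_le_iff, sub_le_iff_le_add', sub_le_iff_le_add']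
  constructor
  · exact smoothMax_le_add hα fun a => by linarith [(abs_le.mp (h a)).2]
  · exact smoothMax_le_add hα fun a => by linarith [(abs_le.mp (h a)).1]

end SmoothMax

lemma abs_sum_mul_le_of_sum_eq_one {ι : Type*} [Fintype ι] {p f : ι → ℝ} {M : ℝ}
    (hp : ∀ i, 0 ≤ p i) (hp1 : ∑ i, p i = 1) (hf : ∀ i, |f i| ≤ M) :
    |∑ i, p i * f i| ≤ M :=
  calc |∑ i, p i * f i| ≤ ∑ i, |p i * f i| := abs_sum_le_sum_abs _ _
    _ ≤ ∑ i, p i * M := by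
        gcongr with i
        rw [abs_mul, abs_of_nonneg (hp i)]
        exact mul_le_mul_of_nonneg_left (hf i) (hp i)
    _ = M := by rw [← sum_mul, hp1, one_mul]

section SupNorm

variable {S A : Type*} [Fintype S] [Fintype A] [Nonempty S] [Nonempty A]

lemma abs_le_supNorm (Q : S → A → ℝ) (s : S) (a : A) : |Q s a| ≤ supNorm Q :=
  le_sup' (fun p : S × A => |Q p.1 p.2|) (mem_univ (s, a))

lemma supNorm_le {Q : S → A → ℝ} {M : ℝ} (h : ∀ s a, |Q s a| ≤ M) : supNorm Q ≤ M :=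
  sup'_le _ _ fun p _ => h p.1 p.2

end SupNorm

lemma softBellman_sub_softBellman {S A : Type*} [Fintype S] [Fintype A]
    (r : S → A → ℝ) (γ : ℝ) (P : S → A → S → ℝ) (α : S → ℝ) (Q Q' : S → A → ℝ) (s : S) (a : A) :
    softBellman r γ P α Q s a - softBellman r γ P α Q' s a =
      γ * ∑ s', P s a s' * (smoothMax (α s') (Q s') - smoothMax (α s') (Q' s')) := by
  simp only [softBellman, smoothMax, mul_sub, sum_sub_distrib]
  ring

theorem softBellman_contraction_general {S A : Type*} [Fintype S] [Fintype A] [Nonempty S] [Nonempty A]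
    (r : S → A → ℝ) (γ : ℝ) (hγ0 : 0 < γ)
    (P : S → A → S → ℝ) (hP : ∀ s a s', 0 ≤ P s a s')
    (hP1 : ∀ s a, ∑ s', P s a s' = 1)
    (α : S → ℝ) (hα : ∀ s, 0 < α s)
    (Q Q' : S → A → ℝ) :
    supNorm (fun s a => softBellman r γ P α Q s a - softBellman r γ P α Q' s a) ≤
      γ * supNorm (fun s a => Q s a - Q' s a) := by
  refine supNorm_le fun s a => ?_
  rw [softBellman_sub_softBellman, abs_mul, abs_of_pos hγ0]
  gcongr
  exact abs_sum_mul_le_of_sum_eq_one (hP s a) (hP1 s a) fun s' =>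
    abs_smoothMax_sub_le (hα s') fun a' => abs_le_supNorm (fun s a => Q s a - Q' s a) s' a'

/-- The soft Bellman operator is a `γ`-contraction in the sup norm:
`‖T_α Q − T_α Q'‖∞ ≤ γ·‖Q − Q'‖∞`. -/
theorem softBellman_contraction {S A : Type*} [Fintype S] [Fintype A] [Nonempty S] [Nonempty A]
    (r : S → A → ℝ) (γ : ℝ) (hγ0 : 0 < γ) (hγ1 : γ < 1)
    (P : S → A → S → ℝ) (hP : ∀ s a s', 0 ≤ P s a s')
    (hP1 : ∀ s a, ∑ s', P s a s' = 1)
    (α : S → ℝ) (hα : ∀ s, 0 < α s)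
    (Q Q' : S → A → ℝ) :
    supNorm (fun s a => softBellman r γ P α Q s a - softBellman r γ P α Q' s a) ≤
      γ * supNorm (fun s a => Q s a - Q' s a) :=
  softBellman_contraction_general r γ hγ0 P hP hP1 α hα Q Q'
end

section
/- (Uniform KL closeness along coupled iterates.) Fix κ > 0 and α_min > 0. Let Q_{t+1}^{(i)} = T_{α_t} Q_t^{(i)} for i ∈ {1,2} be coupled iterates driven by the shared disagreement-scaled temperature α_t(s) = max{α_min, (max_{a∈A} |Q_t^{(1)}(s,a) − Q_t^{(2)}(s,a)|)/κ}. For each t ≥ 0 and each state s ∈ S, let π_t^{(i)}(·|s) be the Boltzmann policy on A at temperature α_t(s) induced by the action-value vector Q_t^{(i)}(s,·). Then for every t ≥ 0 and every s ∈ S, D_KL(π_t^{(1)}(·|s) ‖ π_t^{(2)}(·|s)) ≤ 2κ. -/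
open Finset Real

/-- The Boltzmann policy at temperature `α` induced by `Q : A → ℝ`:
`π(a) = exp(Q(a)/α) / ∑_b exp(Q(b)/α)`. -/
noncomputable def boltzmann {A : Type*} [Fintype A] (Q : A → ℝ) (α : ℝ) (a : A) : ℝ :=
  Real.exp (Q a / α) / ∑ b, Real.exp (Q b / α)

/-- KL divergence between two probability distributions on a finite set:
`D_KL(p‖q) = ∑_a p(a)·log(p(a)/q(a))`. -/
noncomputable def klDiv {A : Type*} [Fintype A] (p q : A → ℝ) : ℝ :=
  ∑ a, p a * Real.log (p a / q a)

/-! At a common temperature `α`, the log-ratio of two Boltzmann policies is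
`log (π¹ a / π² a) = (Q¹ a - Q² a) / α + log Z² - log Z¹`, and both terms are at most
`‖Q¹ - Q²‖∞ / α`, the second because log-sum-exp is `1`-Lipschitz for the sup norm. The KL
divergence is a `π¹`-average of the log-ratio, hence at most `2 ‖Q¹ - Q²‖∞ / α`, and the
disagreement-scaled temperature makes `‖Q¹ - Q²‖∞ / α ≤ κ`. -/

section Boltzmann

variable {A : Type*} [Fintype A]

lemma klDiv_le_of_log_div_le {p q : A → ℝ} {c : ℝ} (hp : ∀ a, 0 ≤ p a) (hp1 : ∑ a, p a = 1)
    (h : ∀ a, Real.log (p a / q a) ≤ c) : klDiv p q ≤ c :=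
  calc klDiv p q ≤ ∑ a, p a * c := sum_le_sum fun a _ => mul_le_mul_of_nonneg_left (h a) (hp a)
    _ = c := by rw [← sum_mul, hp1, one_mul]

variable [Nonempty A] (f g : A → ℝ) (α : ℝ)

lemma sum_exp_div_pos : 0 < ∑ b, Real.exp (f b / α) :=
  sum_pos (fun _ _ => Real.exp_pos _) univ_nonempty

lemma boltzmann_pos (a : A) : 0 < boltzmann f α a :=
  div_pos (Real.exp_pos _) (sum_exp_div_pos f α)

lemma sum_boltzmann : ∑ a, boltzmann f α a = 1 := by
  simp only [boltzmann, ← sum_div]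
  exact div_self (sum_exp_div_pos f α).ne'

lemma log_boltzmann (a : A) :
    Real.log (boltzmann f α a) = f a / α - Real.log (∑ b, Real.exp (f b / α)) := by
  rw [boltzmann, Real.log_div (Real.exp_ne_zero _) (sum_exp_div_pos f α).ne', Real.log_exp]

variable {f g α}

lemma log_sum_exp_div_le_add {M : ℝ} (hα : 0 < α) (hM : ∀ a, g a - f a ≤ M) :
    Real.log (∑ b, Real.exp (g b / α)) ≤ Real.log (∑ b, Real.exp (f b / α)) + M / α := by
  have hsum : ∑ b, Real.exp (g b / α) ≤ Real.exp (M / α) * ∑ b, Real.exp (f b / α) := by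
    rw [mul_sum]
    refine sum_le_sum fun b _ => ?_
    rw [← Real.exp_add, Real.exp_le_exp, ← add_div]
    gcongr
    linarith [hM b]
  calc Real.log (∑ b, Real.exp (g b / α))
      ≤ Real.log (Real.exp (M / α) * ∑ b, Real.exp (f b / α)) :=
        Real.log_le_log (sum_exp_div_pos g α) hsum
    _ = Real.log (∑ b, Real.exp (f b / α)) + M / α := by
        rw [Real.log_mul (Real.exp_ne_zero _) (sum_exp_div_pos f α).ne', Real.log_exp, add_comm]

lemma log_boltzmann_div_le {M : ℝ} (hα : 0 < α) (hM : ∀ a, |f a - g a| ≤ M) (a : A) :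
    Real.log (boltzmann f α a / boltzmann g α a) ≤ 2 * M / α := by
  have hfg : f a / α - g a / α ≤ M / α := by
    rw [← sub_div]
    gcongr
    exact (abs_le.1 (hM a)).2
  have hZ := log_sum_exp_div_le_add (f := f) (g := g) (M := M) hα fun b => by
    linarith [(abs_le.1 (hM b)).1]
  rw [Real.log_div (boltzmann_pos f α a).ne' (boltzmann_pos g α a).ne', log_boltzmann,
    log_boltzmann, mul_div_assoc]
  linarith

lemma klDiv_boltzmann_le {M : ℝ} (hα : 0 < α) (hM : ∀ a, |f a - g a| ≤ M) :
    klDiv (boltzmann f α) (boltzmann g α) ≤ 2 * M / α :=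
  klDiv_le_of_log_div_le (fun a => (boltzmann_pos f α a).le) (sum_boltzmann f α)
    (log_boltzmann_div_le hα hM)

end Boltzmann

theorem uniform_kl_closeness_general {S A : Type*}
    [Fintype A] [Nonempty A]
    (κ αmin : ℝ) (hκ : 0 < κ) (hαmin : 0 < αmin)
    (Q1 Q2 : ℕ → S → A → ℝ)
    (αseq : ℕ → S → ℝ)
    (hαseq : ∀ t s, αseq t s =
      max αmin ((Finset.univ.sup' Finset.univ_nonempty fun a => |Q1 t s a - Q2 t s a|) / κ)) :
    ∀ (t : ℕ) (s : S),
      klDiv (boltzmann (Q1 t s) (αseq t s)) (boltzmann (Q2 t s) (αseq t s)) ≤ 2 * κ := by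
  intro t s
  set M := univ.sup' univ_nonempty fun a => |Q1 t s a - Q2 t s a|
  have hM : ∀ a, |Q1 t s a - Q2 t s a| ≤ M := fun a =>
    le_sup' (fun b => |Q1 t s b - Q2 t s b|) (mem_univ a)
  have hα : 0 < αseq t s := hαseq t s ▸ lt_max_of_lt_left hαmin
  have hMα : M ≤ κ * αseq t s := by
    rw [mul_comm, ← div_le_iff₀ hκ]
    exact hαseq t s ▸ le_max_right _ _
  calc klDiv (boltzmann (Q1 t s) (αseq t s)) (boltzmann (Q2 t s) (αseq t s))
      ≤ 2 * M / αseq t s := klDiv_boltzmann_le hα hM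
    _ ≤ 2 * κ := by rw [div_le_iff₀ hα]; linarith

/-- Uniform KL closeness along coupled iterates: for coupled soft value iterates
driven by the shared disagreement-scaled temperature
`α_t(s) = max{α_min, (max_a |Q_t¹(s,a) − Q_t²(s,a)|)/κ}`, the induced Boltzmann
policies satisfy `D_KL(π_t¹(·|s) ‖ π_t²(·|s)) ≤ 2κ` for every `t` and `s`. -/
theorem uniform_kl_closeness {S A : Type*}
    [Fintype S] [Fintype A] [Nonempty S] [Nonempty A]
    (r : S → A → ℝ) (γ : ℝ) (hγ0 : 0 < γ) (hγ1 : γ < 1)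
    (P : S → A → S → ℝ) (hP : ∀ s a s', 0 ≤ P s a s')
    (hP1 : ∀ s a, ∑ s', P s a s' = 1)
    (κ αmin : ℝ) (hκ : 0 < κ) (hαmin : 0 < αmin)
    (Q1 Q2 : ℕ → S → A → ℝ)
    (αseq : ℕ → S → ℝ)
    (hαseq : ∀ t s, αseq t s =
      max αmin ((Finset.univ.sup' Finset.univ_nonempty fun a => |Q1 t s a - Q2 t s a|) / κ))
    (hQ1 : ∀ t, Q1 (t + 1) = softBellman r γ P (αseq t) (Q1 t))
    (hQ2 : ∀ t, Q2 (t + 1) = softBellman r γ P (αseq t) (Q2 t)) :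
    ∀ (t : ℕ) (s : S),
      klDiv (boltzmann (Q1 t s) (αseq t s)) (boltzmann (Q2 t s) (αseq t s)) ≤ 2 * κ :=
  uniform_kl_closeness_general κ αmin hκ hαmin Q1 Q2 αseq hαseq
end
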